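/- arXiv:1107.5980 — 2 statements merged into one kernel-verified Lean document; each statement's English description precedes it below -/
import Mathlib

section
/- Let ≿ denote any one of the four relations ≿max, ≿min, ≿ms, ≿dms, and ≻ the corresponding strict relation ≻max, ≻min, ≻ms, ≻dms. Let H, H', L, L' be nonempty multisets of integers, and for nonempty H and L define H ⊖ L to be the image of H under x ↦ x − min L. If H ≿ H' and L' ≿min L, then (H ⊖ L) ≿ (H' ⊖ L'). If in addition H ≻ H', or L' ≻min L, then (H ⊖ L) ≻ (H' ⊖ L'). -/
/-- The maximum of a multiset of integers (0 for the empty multiset; only used on nonempty ones). -/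
def mmax (S : Multiset ℤ) : ℤ := WithBot.unbotD 0 ((S.map (fun x => (x : WithBot ℤ))).sup)

/-- The minimum of a multiset of integers (0 for the empty multiset; only used on nonempty ones). -/
def mmin (S : Multiset ℤ) : ℤ := WithTop.untopD 0 ((S.map (fun x => (x : WithTop ℤ))).inf)

/-- max order, weak: S ≿max T. -/
def geMax (S T : Multiset ℤ) : Prop := T = 0 ∨ (S ≠ 0 ∧ T ≠ 0 ∧ mmax S ≥ mmax T)

/-- max order, strict: S ≻max T. -/
def gtMax (S T : Multiset ℤ) : Prop := (S ≠ 0 ∧ T ≠ 0 ∧ mmax S > mmax T) ∨ (S ≠ 0 ∧ T = 0)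

/-- min order, weak: S ≿min T. -/
def geMin (S T : Multiset ℤ) : Prop := S = 0 ∨ (S ≠ 0 ∧ T ≠ 0 ∧ mmin S ≥ mmin T)

/-- min order, strict: S ≻min T. -/
def gtMin (S T : Multiset ℤ) : Prop := (S ≠ 0 ∧ T ≠ 0 ∧ mmin S > mmin T) ∨ (S = 0 ∧ T ≠ 0)

/-- multiset order, strict: S ≻ms T. -/
def gtMS (S T : Multiset ℤ) : Prop :=
  ∃ W U V : Multiset ℤ, U ≠ 0 ∧ S = W + U ∧ T = W + V ∧ gtMax U V

/-- multiset order, weak: S ≿ms T. -/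
def geMS (S T : Multiset ℤ) : Prop := gtMS S T ∨ S = T

/-- dual multiset order, strict: S ≻dms T. -/
def gtDMS (S T : Multiset ℤ) : Prop :=
  ∃ W U V : Multiset ℤ, V ≠ 0 ∧ S = W + U ∧ T = W + V ∧ gtMin U V

/-- dual multiset order, weak: S ≿dms T. -/
def geDMS (S T : Multiset ℤ) : Prop := gtDMS S T ∨ S = T

/-
Each of the four orders is decided elementwise: `S ≿max T` says that every element of `T` is
bounded by some element of `S`, `S ≿min T` that every element of `S` bounds some element of `T`,
and the strict versions ask for strict bounds. Subtracting `min L` from `H` and the larger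
`min L'` from `H'` therefore preserves every such comparison, and makes every weak bound strict
when `min L < min L'`. For the multiset orders, a shift of both sides by the same constant is
applied piecewise to the witnesses `W, U, V`, while a strict shift already gives the required
witnesses with `W = 0`, since `≿ms` implies `≿max` and `≿dms` implies `≿min`.
-/

-- The casts in `mmax` and `mmin` elaborate as a bind in the `Multiset` monad.
theorem mmax_eq_unbotD_sup (S : Multiset ℤ) :
    mmax S = ((S.map ((↑) : ℤ → WithBot ℤ)).sup).unbotD 0 := by
  simp [mmax]

theorem mmin_eq_untopD_inf (S : Multiset ℤ) :
    mmin S = ((S.map ((↑) : ℤ → WithTop ℤ)).inf).untopD 0 := by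
  simp [mmin]

section Extrema

variable {S : Multiset ℤ}

theorem mmax_eq_of_mem {a : ℤ} (ha : a ∈ S) (h : ∀ b ∈ S, b ≤ a) : mmax S = a := by
  have hsup : (S.map ((↑) : ℤ → WithBot ℤ)).sup = a :=
    le_antisymm (Multiset.sup_le.2 (by simpa using h))
      (Multiset.le_sup (Multiset.mem_map_of_mem _ ha))
  rw [mmax_eq_unbotD_sup, hsup, WithBot.unbotD_coe]

theorem mmin_eq_of_mem {a : ℤ} (ha : a ∈ S) (h : ∀ b ∈ S, a ≤ b) : mmin S = a := by
  have hinf : (S.map ((↑) : ℤ → WithTop ℤ)).inf = a :=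
    le_antisymm (Multiset.inf_le (Multiset.mem_map_of_mem _ ha))
      (Multiset.le_inf.2 (by simpa using h))
  rw [mmin_eq_untopD_inf, hinf, WithTop.untopD_coe]

theorem isGreatest_mmax (hS : S ≠ 0) : IsGreatest {x | x ∈ S} (mmax S) := by
  obtain ⟨a, ha, h⟩ := Multiset.exists_max_image id hS
  rw [mmax_eq_of_mem ha h]
  exact ⟨ha, h⟩

theorem isLeast_mmin (hS : S ≠ 0) : IsLeast {x | x ∈ S} (mmin S) := by
  obtain ⟨a, ha, h⟩ := Multiset.exists_min_image id hS
  rw [mmin_eq_of_mem ha h]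
  exact ⟨ha, h⟩

end Extrema

section Elementwise

variable {S T : Multiset ℤ}

theorem geMax_iff : geMax S T ↔ ∀ t ∈ T, ∃ s ∈ S, t ≤ s := by
  rcases eq_or_ne T 0 with rfl | hT
  · simp [geMax]
  rcases eq_or_ne S 0 with rfl | hS
  · simpa [geMax, hT] using Multiset.exists_mem_of_ne_zero hT
  have hS' := isGreatest_mmax hS
  have hT' := isGreatest_mmax hT
  simp only [geMax, hS, hT, false_or, ne_eq, not_false_eq_true, true_and]
  refine ⟨fun h t ht ↦ ⟨mmax S, hS'.1, (hT'.2 ht).trans h⟩, fun h ↦ ?_⟩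
  obtain ⟨s, hs, hle⟩ := h _ hT'.1
  exact hle.trans (hS'.2 hs)

theorem gtMax_iff : gtMax S T ↔ S ≠ 0 ∧ ∀ t ∈ T, ∃ s ∈ S, t < s := by
  rcases eq_or_ne S 0 with rfl | hS
  · simp [gtMax]
  rcases eq_or_ne T 0 with rfl | hT
  · simp [gtMax, hS]
  have hS' := isGreatest_mmax hS
  have hT' := isGreatest_mmax hT
  simp only [gtMax, hS, hT, ne_eq, not_false_eq_true, true_and, and_false, or_false]
  refine ⟨fun h t ht ↦ ⟨mmax S, hS'.1, (hT'.2 ht).trans_lt h⟩, fun h ↦ ?_⟩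
  obtain ⟨s, hs, hlt⟩ := h _ hT'.1
  exact hlt.trans_le (hS'.2 hs)

theorem geMin_iff : geMin S T ↔ ∀ s ∈ S, ∃ t ∈ T, t ≤ s := by
  rcases eq_or_ne S 0 with rfl | hS
  · simp [geMin]
  rcases eq_or_ne T 0 with rfl | hT
  · simpa [geMin, hS] using Multiset.exists_mem_of_ne_zero hS
  have hS' := isLeast_mmin hS
  have hT' := isLeast_mmin hT
  simp only [geMin, hS, hT, false_or, ne_eq, not_false_eq_true, true_and]
  refine ⟨fun h s hs ↦ ⟨mmin T, hT'.1, h.trans (hS'.2 hs)⟩, fun h ↦ ?_⟩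
  obtain ⟨t, ht, hle⟩ := h _ hS'.1
  exact (hT'.2 ht).trans hle

theorem gtMin_iff : gtMin S T ↔ T ≠ 0 ∧ ∀ s ∈ S, ∃ t ∈ T, t < s := by
  rcases eq_or_ne T 0 with rfl | hT
  · simp [gtMin]
  rcases eq_or_ne S 0 with rfl | hS
  · simp [gtMin, hT]
  have hS' := isLeast_mmin hS
  have hT' := isLeast_mmin hT
  simp only [gtMin, hS, hT, ne_eq, not_false_eq_true, true_and, false_and, or_false]
  refine ⟨fun h s hs ↦ ⟨mmin T, hT'.1, h.trans_le (hS'.2 hs)⟩, fun h ↦ ?_⟩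
  obtain ⟨t, ht, hlt⟩ := h _ hS'.1
  exact (hT'.2 ht).trans_lt hlt

end Elementwise

section Map

variable {S T : Multiset ℤ} {f g : ℤ → ℤ}

theorem geMax_of_gtMax (h : gtMax S T) : geMax S T :=
  geMax_iff.2 fun t ht ↦ ((gtMax_iff.1 h).2 t ht).imp fun _ hs ↦ ⟨hs.1, hs.2.le⟩

theorem geMin_of_gtMin (h : gtMin S T) : geMin S T :=
  geMin_iff.2 fun s hs ↦ ((gtMin_iff.1 h).2 s hs).imp fun _ ht ↦ ⟨ht.1, ht.2.le⟩

theorem geMax_map (h : geMax S T) (hfg : ∀ s t, t ≤ s → g t ≤ f s) :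
    geMax (S.map f) (T.map g) := by
  simp only [geMax_iff, Multiset.mem_map, forall_exists_index, and_imp,
    forall_apply_eq_imp_iff₂, exists_exists_and_eq_and] at h ⊢
  exact fun t ht ↦ (h t ht).imp fun s hs ↦ ⟨hs.1, hfg s t hs.2⟩

theorem gtMax_map (h : gtMax S T) (hfg : ∀ s t, t < s → g t < f s) :
    gtMax (S.map f) (T.map g) := by
  simp only [gtMax_iff, ne_eq, Multiset.map_eq_zero, Multiset.mem_map, forall_exists_index,
    and_imp, forall_apply_eq_imp_iff₂, exists_exists_and_eq_and] at h ⊢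
  exact ⟨h.1, fun t ht ↦ (h.2 t ht).imp fun s hs ↦ ⟨hs.1, hfg s t hs.2⟩⟩

theorem gtMax_map_of_geMax (h : geMax S T) (hS : S ≠ 0) (hfg : ∀ s t, t ≤ s → g t < f s) :
    gtMax (S.map f) (T.map g) := by
  simp only [geMax_iff, gtMax_iff, ne_eq, Multiset.map_eq_zero, Multiset.mem_map,
    forall_exists_index, and_imp, forall_apply_eq_imp_iff₂, exists_exists_and_eq_and] at h ⊢
  exact ⟨hS, fun t ht ↦ (h t ht).imp fun s hs ↦ ⟨hs.1, hfg s t hs.2⟩⟩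

theorem geMin_map (h : geMin S T) (hfg : ∀ s t, t ≤ s → g t ≤ f s) :
    geMin (S.map f) (T.map g) := by
  simp only [geMin_iff, Multiset.mem_map, forall_exists_index, and_imp,
    forall_apply_eq_imp_iff₂, exists_exists_and_eq_and] at h ⊢
  exact fun s hs ↦ (h s hs).imp fun t ht ↦ ⟨ht.1, hfg s t ht.2⟩

theorem gtMin_map (h : gtMin S T) (hfg : ∀ s t, t < s → g t < f s) :
    gtMin (S.map f) (T.map g) := by
  simp only [gtMin_iff, ne_eq, Multiset.map_eq_zero, Multiset.mem_map, forall_exists_index,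
    and_imp, forall_apply_eq_imp_iff₂, exists_exists_and_eq_and] at h ⊢
  exact ⟨h.1, fun s hs ↦ (h.2 s hs).imp fun t ht ↦ ⟨ht.1, hfg s t ht.2⟩⟩

theorem gtMin_map_of_geMin (h : geMin S T) (hT : T ≠ 0) (hfg : ∀ s t, t ≤ s → g t < f s) :
    gtMin (S.map f) (T.map g) := by
  simp only [geMin_iff, gtMin_iff, ne_eq, Multiset.map_eq_zero, Multiset.mem_map,
    forall_exists_index, and_imp, forall_apply_eq_imp_iff₂, exists_exists_and_eq_and] at h ⊢
  exact ⟨hT, fun s hs ↦ (h s hs).imp fun t ht ↦ ⟨ht.1, hfg s t ht.2⟩⟩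

end Map

section MultisetOrder

variable {S T : Multiset ℤ} {f : ℤ → ℤ}

theorem gtMS_of_gtMax (h : gtMax S T) : gtMS S T :=
  ⟨0, S, T, (gtMax_iff.1 h).1, (zero_add S).symm, (zero_add T).symm, h⟩

theorem gtDMS_of_gtMin (h : gtMin S T) : gtDMS S T :=
  ⟨0, S, T, (gtMin_iff.1 h).1, (zero_add S).symm, (zero_add T).symm, h⟩

theorem geMax_of_gtMS (h : gtMS S T) : geMax S T := by
  obtain ⟨W, U, V, -, rfl, rfl, hUV⟩ := h
  refine geMax_iff.2 fun t ht ↦ ?_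
  rcases Multiset.mem_add.1 ht with htW | htV
  · exact ⟨t, Multiset.mem_add.2 (Or.inl htW), le_rfl⟩
  · obtain ⟨s, hs, hlt⟩ := (gtMax_iff.1 hUV).2 t htV
    exact ⟨s, Multiset.mem_add.2 (Or.inr hs), hlt.le⟩

theorem geMin_of_gtDMS (h : gtDMS S T) : geMin S T := by
  obtain ⟨W, U, V, -, rfl, rfl, hUV⟩ := h
  refine geMin_iff.2 fun s hs ↦ ?_
  rcases Multiset.mem_add.1 hs with hsW | hsU
  · exact ⟨s, Multiset.mem_add.2 (Or.inl hsW), le_rfl⟩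
  · obtain ⟨t, ht, hlt⟩ := (gtMin_iff.1 hUV).2 s hsU
    exact ⟨t, Multiset.mem_add.2 (Or.inr ht), hlt.le⟩

theorem geMax_of_geMS (h : geMS S T) : geMax S T :=
  h.elim geMax_of_gtMS fun h ↦ h ▸ geMax_iff.2 fun t ht ↦ ⟨t, ht, le_rfl⟩

theorem geMin_of_geDMS (h : geDMS S T) : geMin S T :=
  h.elim geMin_of_gtDMS fun h ↦ h ▸ geMin_iff.2 fun s hs ↦ ⟨s, hs, le_rfl⟩

theorem gtMS_map (h : gtMS S T) (hf : StrictMono f) : gtMS (S.map f) (T.map f) := by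
  obtain ⟨W, U, V, hU, rfl, rfl, hUV⟩ := h
  exact ⟨W.map f, U.map f, V.map f, by simpa using hU, Multiset.map_add _ _ _,
    Multiset.map_add _ _ _, gtMax_map hUV fun _ _ h ↦ hf h⟩

theorem gtDMS_map (h : gtDMS S T) (hf : StrictMono f) : gtDMS (S.map f) (T.map f) := by
  obtain ⟨W, U, V, hV, rfl, rfl, hUV⟩ := h
  exact ⟨W.map f, U.map f, V.map f, by simpa using hV, Multiset.map_add _ _ _,
    Multiset.map_add _ _ _, gtMin_map hUV fun _ _ h ↦ hf h⟩

theorem geMS_map (h : geMS S T) (hf : StrictMono f) : geMS (S.map f) (T.map f) :=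
  h.imp (gtMS_map · hf) (congrArg _)

theorem geDMS_map (h : geDMS S T) (hf : StrictMono f) : geDMS (S.map f) (T.map f) :=
  h.imp (gtDMS_map · hf) (congrArg _)

end MultisetOrder

structure ShiftCompatible (ge gt : Multiset ℤ → Multiset ℤ → Prop) : Prop where
  ge_of_gt {S T : Multiset ℤ} : gt S T → ge S T
  ge_map_sub {S T : Multiset ℤ} (c : ℤ) : ge S T → ge (S.map (· - c)) (T.map (· - c))
  gt_map_sub {S T : Multiset ℤ} (c : ℤ) : gt S T → gt (S.map (· - c)) (T.map (· - c))
  gt_map_sub_of_lt {S T : Multiset ℤ} {c c' : ℤ} :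
    S ≠ 0 → T ≠ 0 → ge S T → c < c' → gt (S.map (· - c)) (T.map (· - c'))

namespace ShiftCompatible

theorem max : ShiftCompatible geMax gtMax where
  ge_of_gt := geMax_of_gtMax
  ge_map_sub c h := geMax_map h fun _ _ h ↦ sub_le_sub_right h c
  gt_map_sub c h := gtMax_map h fun _ _ h ↦ sub_lt_sub_right h c
  gt_map_sub_of_lt hS _ h hc := gtMax_map_of_geMax h hS fun _ _ h ↦ by omega

theorem min : ShiftCompatible geMin gtMin where
  ge_of_gt := geMin_of_gtMin
  ge_map_sub c h := geMin_map h fun _ _ h ↦ sub_le_sub_right h c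
  gt_map_sub c h := gtMin_map h fun _ _ h ↦ sub_lt_sub_right h c
  gt_map_sub_of_lt _ hT h hc := gtMin_map_of_geMin h hT fun _ _ h ↦ by omega

theorem ms : ShiftCompatible geMS gtMS where
  ge_of_gt := Or.inl
  ge_map_sub c h := geMS_map h fun _ _ h ↦ sub_lt_sub_right h c
  gt_map_sub c h := gtMS_map h fun _ _ h ↦ sub_lt_sub_right h c
  gt_map_sub_of_lt hS hT h hc := gtMS_of_gtMax (max.gt_map_sub_of_lt hS hT (geMax_of_geMS h) hc)

theorem dms : ShiftCompatible geDMS gtDMS where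
  ge_of_gt := Or.inl
  ge_map_sub c h := geDMS_map h fun _ _ h ↦ sub_lt_sub_right h c
  gt_map_sub c h := gtDMS_map h fun _ _ h ↦ sub_lt_sub_right h c
  gt_map_sub_of_lt hS hT h hc :=
    gtDMS_of_gtMin (min.gt_map_sub_of_lt hS hT (geMin_of_geDMS h) hc)

variable {ge gt : Multiset ℤ → Multiset ℤ → Prop}

theorem map_sub_of_le (hR : ShiftCompatible ge gt) {H H' : Multiset ℤ} (hH : H ≠ 0)
    (hH' : H' ≠ 0) (h : ge H H') {c c' : ℤ} (hc : c ≤ c') :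
    ge (H.map (· - c)) (H'.map (· - c')) ∧
      (gt H H' ∨ c < c' → gt (H.map (· - c)) (H'.map (· - c'))) := by
  rcases hc.eq_or_lt with rfl | hlt
  · exact ⟨hR.ge_map_sub c h, fun h' ↦ hR.gt_map_sub c (h'.resolve_right (lt_irrefl c))⟩
  · have hgt := hR.gt_map_sub_of_lt hH hH' h hlt
    exact ⟨hR.ge_of_gt hgt, fun _ ↦ hgt⟩

end ShiftCompatible

theorem diff_decreasing_lowMin_general (ge gt : Multiset ℤ → Multiset ℤ → Prop)
    (hrel : (ge = geMax ∧ gt = gtMax) ∨ (ge = geMin ∧ gt = gtMin) ∨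
            (ge = geMS ∧ gt = gtMS) ∨ (ge = geDMS ∧ gt = gtDMS))
    (H H' L L' : Multiset ℤ)
    (hH : H ≠ 0) (hH' : H' ≠ 0) (hL' : L' ≠ 0)
    (h1 : ge H H') (h2 : geMin L' L) :
    ge (H.map (fun x => x - mmin L)) (H'.map (fun x => x - mmin L')) ∧
    ((gt H H' ∨ gtMin L' L) →
      gt (H.map (fun x => x - mmin L)) (H'.map (fun x => x - mmin L'))) := by
  have hR : ShiftCompatible ge gt := by
    rcases hrel with ⟨rfl, rfl⟩ | ⟨rfl, rfl⟩ | ⟨rfl, rfl⟩ | ⟨rfl, rfl⟩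
    exacts [.max, .min, .ms, .dms]
  have hle : mmin L ≤ mmin L' := (h2.resolve_left hL').2.2
  have hlt : gtMin L' L → mmin L < mmin L' := by
    rintro (⟨-, -, h⟩ | ⟨h, -⟩)
    exacts [h, absurd h hL']
  obtain ⟨hge, hgt⟩ := hR.map_sub_of_le hH hH' h1 hle
  exact ⟨hge, fun h ↦ hgt (h.imp_right hlt)⟩

/-- Decreasing difference, where the low sets are of type `min` and the difference
`H ⊖ L` is the image of `H` under `x ↦ x - min L`; `≿`/`≻` is any one of the four
multiset orders. -/
theorem diff_decreasing_lowMin (ge gt : Multiset ℤ → Multiset ℤ → Prop)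
    (hrel : (ge = geMax ∧ gt = gtMax) ∨ (ge = geMin ∧ gt = gtMin) ∨
            (ge = geMS ∧ gt = gtMS) ∨ (ge = geDMS ∧ gt = gtDMS))
    (H H' L L' : Multiset ℤ)
    (hH : H ≠ 0) (hH' : H' ≠ 0) (hL : L ≠ 0) (hL' : L' ≠ 0)
    (h1 : ge H H') (h2 : geMin L' L) :
    ge (H.map (fun x => x - mmin L)) (H'.map (fun x => x - mmin L')) ∧
    ((gt H H' ∨ gtMin L' L) →
      gt (H.map (fun x => x - mmin L)) (H'.map (fun x => x - mmin L'))) :=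
  diff_decreasing_lowMin_general ge gt hrel H H' L L' hH hH' hL' h1 h2
end

section
/- Let φ denote either the maximum function max or the minimum function min on nonempty multisets of integers, and let ≿φ and ≻φ denote the corresponding order (≿max, ≻max or ≿min, ≻min). Let H, H', L, L' be nonempty multisets of integers, and for nonempty H and L define H ⊖ L to be the image of L under ℓ ↦ φ(H) − ℓ. If H ≿φ H' and L' ≿dms L, then (H ⊖ L) ≿ms (H' ⊖ L'). If in addition H ≻φ H', or L' ≻dms L, then (H ⊖ L) ≻ms (H' ⊖ L'). -/
section

variable {S T L L' : Multiset ℤ}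

theorem mmax_eq_of_mem_of_forall_le {m : ℤ} (hm : m ∈ S) (h : ∀ x ∈ S, x ≤ m) : mmax S = m := by
  have hsup : (S.map WithBot.some).sup = m :=
    le_antisymm (Multiset.sup_le.2 fun _ hx ↦ by
        obtain ⟨x, hxS, rfl⟩ := Multiset.mem_map.1 hx
        exact WithBot.coe_le_coe.2 (h x hxS))
      (Multiset.le_sup (Multiset.mem_map_of_mem _ hm))
  -- the coercion in `mmax` elaborates through the `Multiset` monad; `simp` turns it into a `map`
  simp [mmax, hsup]

theorem mmin_eq_of_mem_of_forall_le {m : ℤ} (hm : m ∈ S) (h : ∀ x ∈ S, m ≤ x) : mmin S = m := by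
  have hinf : (S.map WithTop.some).inf = m :=
    le_antisymm (Multiset.inf_le (Multiset.mem_map_of_mem _ hm))
      (Multiset.le_inf.2 fun _ hx ↦ by
        obtain ⟨x, hxS, rfl⟩ := Multiset.mem_map.1 hx
        exact WithTop.coe_le_coe.2 (h x hxS))
  simp [mmin, hinf]

theorem mmin_mem_and_le (hS : S ≠ 0) : mmin S ∈ S ∧ ∀ x ∈ S, mmin S ≤ x := by
  obtain ⟨m, hm, h⟩ := Multiset.exists_min_image id hS
  rw [mmin_eq_of_mem_of_forall_le hm h]
  exact ⟨hm, h⟩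

theorem mmax_map_sub (c : ℤ) (hS : S ≠ 0) : mmax (S.map (c - ·)) = c - mmin S := by
  obtain ⟨hmem, hle⟩ := mmin_mem_and_le hS
  refine mmax_eq_of_mem_of_forall_le (Multiset.mem_map_of_mem _ hmem) fun _ hx ↦ ?_
  obtain ⟨l, hl, rfl⟩ := Multiset.mem_map.1 hx
  exact sub_le_sub_left (hle l hl) c

theorem geMax.mmax_le (h : geMax S T) (hT : T ≠ 0) : mmax T ≤ mmax S := by
  rcases h with h | ⟨-, -, h⟩
  exacts [absurd h hT, h]

theorem gtMax.mmax_lt (h : gtMax S T) (hT : T ≠ 0) : mmax T < mmax S := by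
  rcases h with ⟨-, -, h⟩ | ⟨-, h⟩
  exacts [h, absurd h hT]

theorem geMin.mmin_le (h : geMin S T) (hS : S ≠ 0) : mmin T ≤ mmin S := by
  rcases h with h | ⟨-, -, h⟩
  exacts [absurd h hS, h]

theorem gtMin.mmin_lt (h : gtMin S T) (hS : S ≠ 0) : mmin T < mmin S := by
  rcases h with ⟨-, -, h⟩ | ⟨h, -⟩
  exacts [h, absurd h hS]

theorem gtMin.gtMax_map_sub (c : ℤ) (h : gtMin S T) :
    gtMax (T.map (c - ·)) (S.map (c - ·)) := by
  rcases h with ⟨hS, hT, hlt⟩ | ⟨rfl, hT⟩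
  · left
    refine ⟨by simpa using hT, by simpa using hS, ?_⟩
    rw [mmax_map_sub c hT, mmax_map_sub c hS]
    omega
  · exact Or.inr ⟨by simpa using hT, Multiset.map_zero _⟩

theorem gtDMS.gtMS_map_sub (c : ℤ) (h : gtDMS L' L) :
    gtMS (L.map (c - ·)) (L'.map (c - ·)) := by
  obtain ⟨W, U, V, hV, rfl, rfl, hUV⟩ := h
  exact ⟨W.map (c - ·), V.map (c - ·), U.map (c - ·), by simpa using hV,
    Multiset.map_add _ _ _, Multiset.map_add _ _ _, hUV.gtMax_map_sub c⟩

theorem geDMS.mmin_le (h : geDMS L' L) (hL' : L' ≠ 0) : mmin L ≤ mmin L' := by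
  rcases h with ⟨W, U, V, hV, rfl, rfl, hUV⟩ | rfl
  · have hL : W + V ≠ 0 := by simp [hV]
    have hminV : mmin (W + V) ≤ mmin V :=
      (mmin_mem_and_le hL).2 _ (Multiset.mem_add.2 (Or.inr (mmin_mem_and_le hV).1))
    suffices ∀ x ∈ W + U, mmin (W + V) ≤ x from this _ (mmin_mem_and_le hL').1
    intro x hx
    rcases Multiset.mem_add.1 hx with hxW | hxU
    · exact (mmin_mem_and_le hL).2 x (Multiset.mem_add.2 (Or.inl hxW))
    · have hU : U ≠ 0 := by rintro rfl; exact Multiset.notMem_zero x hxU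
      have hUx : mmin U ≤ x := (mmin_mem_and_le hU).2 x hxU
      have hVU : mmin V < mmin U := hUV.mmin_lt hU
      omega
  · exact le_rfl

theorem gtMS_map_sub_of_lt {a b : ℤ} (hab : b < a) (hL : L ≠ 0) (hL' : L' ≠ 0)
    (hmin : mmin L ≤ mmin L') : gtMS (L.map (a - ·)) (L'.map (b - ·)) := by
  refine ⟨0, _, _, by simpa using hL, (zero_add _).symm, (zero_add _).symm,
    Or.inl ⟨by simpa using hL, by simpa using hL', ?_⟩⟩
  rw [mmax_map_sub a hL, mmax_map_sub b hL']
  omega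

theorem gtMS_map_sub {a b : ℤ} (hab : b ≤ a) (hL : L ≠ 0) (hL' : L' ≠ 0) (h : geDMS L' L)
    (hstrict : b < a ∨ gtDMS L' L) : gtMS (L.map (a - ·)) (L'.map (b - ·)) := by
  rcases hab.lt_or_eq with hlt | rfl
  · exact gtMS_map_sub_of_lt hlt hL hL' (h.mmin_le hL')
  · exact (hstrict.resolve_left (lt_irrefl b)).gtMS_map_sub b

theorem geMS_map_sub {a b : ℤ} (hab : b ≤ a) (hL : L ≠ 0) (hL' : L' ≠ 0) (h : geDMS L' L) :
    geMS (L.map (a - ·)) (L'.map (b - ·)) := by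
  by_cases hstrict : b < a ∨ gtDMS L' L
  · exact Or.inl (gtMS_map_sub hab hL hL' h hstrict)
  · push Not at hstrict
    obtain rfl : b = a := le_antisymm hab hstrict.1
    rcases h with hd | rfl
    exacts [absurd hd hstrict.2, Or.inr rfl]

end

/-- Decreasing difference, where the low sets are of type `dms`, the high sets of
type `max` or `min` (with `φ` the corresponding function), and the difference `H ⊖ L`
is the image of `L` under `ℓ ↦ φ H - ℓ`; the difference has type `ms`. -/
theorem diff_decreasing_lowDMS (φ : Multiset ℤ → ℤ) (geφ gtφ : Multiset ℤ → Multiset ℤ → Prop)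
    (hrel : (φ = mmax ∧ geφ = geMax ∧ gtφ = gtMax) ∨ (φ = mmin ∧ geφ = geMin ∧ gtφ = gtMin))
    (H H' L L' : Multiset ℤ)
    (hH : H ≠ 0) (hH' : H' ≠ 0) (hL : L ≠ 0) (hL' : L' ≠ 0)
    (h1 : geφ H H') (h2 : geDMS L' L) :
    geMS (L.map (fun l => φ H - l)) (L'.map (fun l => φ H' - l)) ∧
    ((gtφ H H' ∨ gtDMS L' L) →
      gtMS (L.map (fun l => φ H - l)) (L'.map (fun l => φ H' - l))) := by
  obtain ⟨hle, hlt⟩ : φ H' ≤ φ H ∧ (gtφ H H' → φ H' < φ H) := by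
    rcases hrel with ⟨rfl, rfl, rfl⟩ | ⟨rfl, rfl, rfl⟩
    · exact ⟨h1.mmax_le hH', fun h ↦ h.mmax_lt hH'⟩
    · exact ⟨h1.mmin_le hH, fun h ↦ h.mmin_lt hH⟩
  exact ⟨geMS_map_sub hle hL hL' h2, fun h ↦ gtMS_map_sub hle hL hL' h2 (h.imp_left hlt)⟩
end
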